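/- arXiv:1603.02066 — 2 statements merged into one kernel-verified Lean document; each statement's English description precedes it below -/
import Mathlib

section
/- Let n ≥ 1 and let μ : ℤ[e₁, e₂] → ℤ[z₁, z₂]/(z₁^{n+1}, z₂^{n+1}) be the ring homomorphism determined by μ(e₁) = z₁ + z₂ and μ(e₂) = z₁z₂. Then the kernel of μ is the ideal of ℤ[e₁, e₂] generated by e₂^{n+1}, r_{n+1}, and r_{n+2}, where the polynomials r_k ∈ ℤ[e₁, e₂] are defined by r₀ = 2, r₁ = e₁, and r_{k+2} = e₁·r_{k+1} − e₂·r_k (so that r_k(z₁+z₂, z₁z₂) = z₁^k + z₂^k). -/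
open MvPolynomial


namespace KerAux

noncomputable def phi : MvPolynomial (Fin 2) ℤ →ₐ[ℤ] MvPolynomial (Fin 2) ℤ :=
  aeval ![X 0 + X 1, X 0 * X 1]

lemma phi_X0 : phi (X 0) = X 0 + X 1 := by simp [phi]

lemma phi_X1 : phi (X 1) = X 0 * X 1 := by simp [phi]

noncomputable def d (a b : ℕ) : Fin 2 →₀ ℕ := Finsupp.single 0 a + Finsupp.single 1 b

lemma d_apply0 (a b : ℕ) : d a b 0 = a := by
  simp [d, Finsupp.single_apply]

lemma d_apply1 (a b : ℕ) : d a b 1 = b := by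
  simp [d, Finsupp.single_apply]

lemma d_inj {a b a' b' : ℕ} (h : d a b = d a' b') : a = a' ∧ b = b' := by
  constructor
  · have := DFunLike.congr_fun h 0
    simpa [d_apply0] using this
  · have := DFunLike.congr_fun h 1
    simpa [d_apply1] using this

lemma fmon_eq (a b : ℕ) :
    (X 0 ^ a * X 1 ^ b : MvPolynomial (Fin 2) ℤ) = monomial (d a b) 1 := by
  rw [X_pow_eq_monomial, X_pow_eq_monomial, monomial_mul, one_mul]; rfl

lemma coeff_fmon (a b c e : ℕ) :
    coeff (d a b) (X 0 ^ c * X 1 ^ e : MvPolynomial (Fin 2) ℤ)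
      = if c = a ∧ e = b then 1 else 0 := by
  rw [fmon_eq, coeff_monomial]
  by_cases h : c = a ∧ e = b
  · obtain ⟨rfl, rfl⟩ := h; simp
  · rw [if_neg h, if_neg]
    intro hd
    exact h ⟨(d_inj hd).1, (d_inj hd).2⟩

end KerAux

namespace KerAux

variable {n : ℕ} {r : ℕ → MvPolynomial (Fin 2) ℤ}

lemma phi_r (hr0 : r 0 = 2) (hr1 : r 1 = X 0)
    (hrec : ∀ k : ℕ, r (k + 2) = X 0 * r (k + 1) - X 1 * r k) :
    ∀ k, phi (r k) = X 0 ^ k + X 1 ^ k := by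
  intro k
  induction k using Nat.twoStepInduction with
  | zero => rw [hr0, map_ofNat]; norm_num
  | one => rw [hr1, phi_X0]; ring
  | more k ih1 ih0 =>
    rw [hrec k, map_sub, map_mul, map_mul, phi_X0, phi_X1, ih1, ih0]
    ring
end KerAux
namespace KerAux
variable {n : ℕ} {r : ℕ → MvPolynomial (Fin 2) ℤ}

lemma rJ (hrec : ∀ k : ℕ, r (k + 2) = X 0 * r (k + 1) - X 1 * r k)
    (J : Ideal (MvPolynomial (Fin 2) ℤ))
    (hJ1 : r (n + 1) ∈ J) (hJ2 : r (n + 2) ∈ J) :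
    ∀ m, r (n + 1 + m) ∈ J := by
  intro m
  induction m using Nat.twoStepInduction with
  | zero => exact hJ1
  | one => exact hJ2
  | more m ih0 ih1 =>
    have : n + 1 + (m + 2) = (n + 1 + m) + 2 := by ring
    rw [this, hrec]
    exact sub_mem (Ideal.mul_mem_left _ _ (by rw [show n + 1 + m + 1 = n + 1 + (m+1) from by ring]; exact ih1))
      (Ideal.mul_mem_left _ _ ih0)

lemma eJ (hrec : ∀ k : ℕ, r (k + 2) = X 0 * r (k + 1) - X 1 * r k)
    (J : Ideal (MvPolynomial (Fin 2) ℤ))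
    (hJ1 : r (n + 1) ∈ J) (hJ2 : r (n + 2) ∈ J) :
    ∀ t k, t + k = n + 1 → X 1 ^ t * r k ∈ J ∧ X 1 ^ t * r (k + 1) ∈ J := by
  intro t
  induction t with
  | zero =>
    intro k hk
    simp only [pow_zero, one_mul]
    have : k = n + 1 := by omega
    subst this
    exact ⟨hJ1, hJ2⟩
  | succ t ih =>
    intro k hk
    have hk' : t + (k + 1) = n + 1 := by omega
    obtain ⟨h1, h2⟩ := ih (k + 1) hk'
    have key : (X 1 : MvPolynomial (Fin 2) ℤ) * r k = X 0 * r (k + 1) - r (k + 2) := by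
      rw [hrec k]; ring
    constructor
    · have : (X 1 : MvPolynomial (Fin 2) ℤ) ^ (t + 1) * r k
          = X 0 * (X 1 ^ t * r (k + 1)) - X 1 ^ t * r (k + 2) := by
        rw [pow_succ]
        calc (X 1 : MvPolynomial (Fin 2) ℤ) ^ t * X 1 * r k
            = X 1 ^ t * (X 1 * r k) := by ring
          _ = X 1 ^ t * (X 0 * r (k + 1) - r (k + 2)) := by rw [key]
          _ = _ := by ring
      rw [this]
      exact sub_mem (Ideal.mul_mem_left _ _ h1) h2
    · have : (X 1 : MvPolynomial (Fin 2) ℤ) ^ (t + 1) * r (k + 1)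
          = X 1 * (X 1 ^ t * r (k + 1)) := by ring
      rw [this]
      exact Ideal.mul_mem_left _ _ h1
end KerAux
namespace KerAux
variable {n : ℕ} {r : ℕ → MvPolynomial (Fin 2) ℤ}

noncomputable def rr (r : ℕ → MvPolynomial (Fin 2) ℤ) : ℕ → MvPolynomial (Fin 2) ℤ
  | 0 => 1
  | k + 1 => r (k + 1)

noncomputable def g (n : ℕ) (r : ℕ → MvPolynomial (Fin 2) ℤ) (p : ℕ × ℕ) :
    MvPolynomial (Fin 2) ℤ :=
  if p.1 + p.2 ≤ n then X 1 ^ p.1 * rr r p.2 else 0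

lemma Hmem (hrec : ∀ k : ℕ, r (k + 2) = X 0 * r (k + 1) - X 1 * r k)
    (J : Ideal (MvPolynomial (Fin 2) ℤ))
    (hX : (X 1 : MvPolynomial (Fin 2) ℤ) ^ (n + 1) ∈ J)
    (hJ1 : r (n + 1) ∈ J) (hJ2 : r (n + 2) ∈ J) :
    ∀ j k, X 1 ^ j * rr r k ∈
      (J.restrictScalars ℤ ⊔ Submodule.span ℤ (Set.range (g n r)) :
        Submodule ℤ (MvPolynomial (Fin 2) ℤ)) := by
  intro j k
  by_cases hb : j + k ≤ n
  · exact Submodule.mem_sup_right (Submodule.subset_span ⟨(j, k), by simp [g, hb]⟩)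
  · apply Submodule.mem_sup_left
    show X 1 ^ j * rr r k ∈ J
    match k with
    | 0 =>
      simp only [rr, mul_one]
      obtain ⟨t, rfl⟩ : ∃ t, j = (n + 1) + t := ⟨j - (n+1), by omega⟩
      rw [pow_add]
      exact Ideal.mul_mem_right _ _ hX
    | (k' + 1) =>
      show X 1 ^ j * r (k' + 1) ∈ J
      by_cases hk : n + 1 ≤ k' + 1
      · obtain ⟨m, hm⟩ : ∃ m, k' + 1 = n + 1 + m := ⟨k' + 1 - (n+1), by omega⟩
        rw [hm]
        exact Ideal.mul_mem_left _ _ (rJ hrec J hJ1 hJ2 m)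
      · have ht : (n + 1 - (k' + 1)) + (k' + 1) = n + 1 := by omega
        have hmem := (eJ hrec J hJ1 hJ2 (n + 1 - (k' + 1)) (k' + 1) ht).1
        obtain ⟨s, rfl⟩ : ∃ s, j = s + (n + 1 - (k' + 1)) := ⟨j - (n + 1 - (k'+1)), by omega⟩
        rw [pow_add, mul_assoc]
        exact Ideal.mul_mem_left _ _ hmem

lemma HmemR (hrec : ∀ k : ℕ, r (k + 2) = X 0 * r (k + 1) - X 1 * r k)
    (hr0 : r 0 = 2)
    (J : Ideal (MvPolynomial (Fin 2) ℤ))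
    (hX : (X 1 : MvPolynomial (Fin 2) ℤ) ^ (n + 1) ∈ J)
    (hJ1 : r (n + 1) ∈ J) (hJ2 : r (n + 2) ∈ J) :
    ∀ j k, X 1 ^ j * r k ∈
      (J.restrictScalars ℤ ⊔ Submodule.span ℤ (Set.range (g n r)) :
        Submodule ℤ (MvPolynomial (Fin 2) ℤ)) := by
  intro j k
  match k with
  | 0 =>
    rw [hr0]
    have : (X 1 : MvPolynomial (Fin 2) ℤ) ^ j * 2 = (2 : ℤ) • (X 1 ^ j * rr r 0) := by
      simp [rr]; ring
    rw [this]
    exact Submodule.smul_mem _ _ (Hmem hrec J hX hJ1 hJ2 j 0)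
  | (k' + 1) => exact Hmem hrec J hX hJ1 hJ2 j (k' + 1)

lemma span_top (hrec : ∀ k : ℕ, r (k + 2) = X 0 * r (k + 1) - X 1 * r k)
    (hr0 : r 0 = 2) (hr1 : r 1 = X 0)
    (J : Ideal (MvPolynomial (Fin 2) ℤ))
    (hX : (X 1 : MvPolynomial (Fin 2) ℤ) ^ (n + 1) ∈ J)
    (hJ1 : r (n + 1) ∈ J) (hJ2 : r (n + 2) ∈ J) :
    ∀ p : MvPolynomial (Fin 2) ℤ, p ∈
      (J.restrictScalars ℤ ⊔ Submodule.span ℤ (Set.range (g n r)) :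
        Submodule ℤ (MvPolynomial (Fin 2) ℤ)) := by
  set N := (J.restrictScalars ℤ ⊔ Submodule.span ℤ (Set.range (g n r)) :
      Submodule ℤ (MvPolynomial (Fin 2) ℤ)) with hN
  have hone : (1 : MvPolynomial (Fin 2) ℤ) ∈ N := by
    have := Hmem hrec J hX hJ1 hJ2 0 0
    simpa [rr] using this
  have hmulX : ∀ p ∈ N, ∀ i : Fin 2, p * X i ∈ N := by
    have key : ∀ (i : Fin 2), N ≤ N.comap (LinearMap.mulRight ℤ (X i : MvPolynomial (Fin 2) ℤ)) := by
      intro i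
      apply sup_le
      · intro p hp
        simp only [Submodule.mem_comap, LinearMap.mulRight_apply]
        exact Submodule.mem_sup_left (Ideal.mul_mem_right _ _ hp)
      · rw [Submodule.span_le]
        rintro _ ⟨⟨j, k⟩, rfl⟩
        simp only [Submodule.mem_comap, LinearMap.mulRight_apply, SetLike.mem_coe]
        by_cases hb : j + k ≤ n
        · simp only [g, hb, if_true]
          fin_cases i
          · -- times X 0
            show X 1 ^ j * rr r k * X 0 ∈ N
            match k with
            | 0 =>
              have : (X 1 : MvPolynomial (Fin 2) ℤ) ^ j * rr r 0 * X 0 = X 1 ^ j * rr r 1 := by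
                simp only [rr]
                rw [hr1]
                ring
              rw [this]; exact Hmem hrec J hX hJ1 hJ2 j 1
            | (k' + 1) =>
              have : (X 1 : MvPolynomial (Fin 2) ℤ) ^ j * rr r (k' + 1) * X 0
                  = X 1 ^ j * rr r (k' + 2) + X 1 ^ (j + 1) * r k' := by
                show (X 1 : MvPolynomial (Fin 2) ℤ) ^ j * r (k' + 1) * X 0
                  = X 1 ^ j * r (k' + 2) + X 1 ^ (j + 1) * r k'
                rw [hrec k']; ring
              rw [this]
              exact add_mem (Hmem hrec J hX hJ1 hJ2 j (k' + 2))
                (HmemR hrec hr0 J hX hJ1 hJ2 (j + 1) k')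
          · -- times X 1
            show X 1 ^ j * rr r k * X 1 ∈ N
            have : (X 1 : MvPolynomial (Fin 2) ℤ) ^ j * rr r k * X 1
                = X 1 ^ (j + 1) * rr r k := by ring
            rw [this]; exact Hmem hrec J hX hJ1 hJ2 (j + 1) k
        · simp [g, hb]
    intro p hp i
    have := key i hp
    simpa using this
  intro p
  induction p using MvPolynomial.induction_on with
  | C a =>
    have : (C a : MvPolynomial (Fin 2) ℤ) = a • (1 : MvPolynomial (Fin 2) ℤ) := by
      rw [zsmul_eq_mul, mul_one]
      simp
    rw [this]
    exact Submodule.smul_mem _ _ hone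
  | add p q hp hq => exact add_mem hp hq
  | mul_X p i hp => exact hmulX p hp i
end KerAux
namespace KerAux
variable {n : ℕ} {r : ℕ → MvPolynomial (Fin 2) ℤ}

lemma coeff_I (p : MvPolynomial (Fin 2) ℤ)
    (hp : p ∈ Ideal.span ({X 0 ^ (n + 1), X 1 ^ (n + 1)} : Set (MvPolynomial (Fin 2) ℤ)))
    (a b : ℕ) (ha : a ≤ n) (hb : b ≤ n) : coeff (d a b) p = 0 := by
  obtain ⟨u, v, huv⟩ := Ideal.mem_span_pair.mp hp
  rw [← huv, coeff_add]
  have h0 : coeff (d a b) (u * X 0 ^ (n + 1)) = 0 := by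
    rw [X_pow_eq_monomial, coeff_mul_monomial', if_neg]
    intro hle
    have := Finsupp.single_le_iff.mp hle
    rw [d_apply0] at this
    omega
  have h1 : coeff (d a b) (v * X 1 ^ (n + 1)) = 0 := by
    rw [X_pow_eq_monomial, coeff_mul_monomial', if_neg]
    intro hle
    have := Finsupp.single_le_iff.mp hle
    rw [d_apply1] at this
    omega
  rw [h0, h1, add_zero]

lemma coeff_phi_g (hr0 : r 0 = 2) (hr1 : r 1 = X 0)
    (hrec : ∀ k : ℕ, r (k + 2) = X 0 * r (k + 1) - X 1 * r k)
    (j k : ℕ) (hjk : j + k ≤ n) (s : ℕ × ℕ) :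
    coeff (d (j + k) j) (phi (g n r s)) = if s = (j, k) then 1 else 0 := by
  obtain ⟨j', k'⟩ := s
  by_cases hb : j' + k' ≤ n
  · match k' with
    | 0 =>
      have hg : phi (g n r (j', 0)) = X 0 ^ j' * X 1 ^ j' := by
        simp only [g, hb, if_true, rr, mul_one, map_pow, phi_X1]
        ring
      rw [hg, coeff_fmon]
      by_cases h : ((j', 0) : ℕ × ℕ) = (j, k)
      · rw [Prod.mk.injEq] at h
        obtain ⟨rfl, rfl⟩ := h
        simp
      · rw [if_neg, if_neg h]
        rw [Prod.mk.injEq] at h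
        omega
    | (k'' + 1) =>
      have hg : phi (g n r (j', k'' + 1))
          = X 0 ^ (j' + (k'' + 1)) * X 1 ^ j' + X 0 ^ j' * X 1 ^ (j' + (k'' + 1)) := by
        have : g n r (j', k'' + 1) = X 1 ^ j' * r (k'' + 1) := by
          simp only [g, hb, if_true, rr]
        rw [this, map_mul, map_pow, phi_X1,
          phi_r hr0 hr1 hrec (k'' + 1)]
        ring
      rw [hg, coeff_add, coeff_fmon, coeff_fmon]
      by_cases h : ((j', k'' + 1) : ℕ × ℕ) = (j, k)
      · rw [Prod.mk.injEq] at h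
        obtain ⟨rfl, rfl⟩ := h
        rw [if_pos (by omega), if_neg (by omega), if_pos rfl]
        norm_num
      · rw [Prod.mk.injEq] at h
        rw [if_neg (by omega), if_neg (by omega), if_neg (by rw [Prod.mk.injEq]; omega)]
        norm_num
  · have : g n r (j', k') = 0 := by simp [g, hb]
    rw [this, map_zero, coeff_zero, if_neg]
    rw [Prod.mk.injEq]
    omega

lemma inj_part (hr0 : r 0 = 2) (hr1 : r 1 = X 0)
    (hrec : ∀ k : ℕ, r (k + 2) = X 0 * r (k + 1) - X 1 * r k)
    (m : MvPolynomial (Fin 2) ℤ)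
    (hm : m ∈ Submodule.span ℤ (Set.range (g n r)))
    (hI : phi m ∈ Ideal.span ({X 0 ^ (n + 1), X 1 ^ (n + 1)} : Set (MvPolynomial (Fin 2) ℤ))) :
    m = 0 := by
  obtain ⟨c, rfl⟩ := Finsupp.mem_span_range_iff_exists_finsupp.mp hm
  have key : ∀ j k : ℕ, j + k ≤ n → c (j, k) = 0 := by
    intro j k hjk
    have hphi : phi (c.sum fun i a => a • g n r i)
        = ∑ s ∈ c.support, c s • phi (g n r s) := by
      rw [Finsupp.sum, map_sum]
      exact Finset.sum_congr rfl fun s _ => by rw [map_zsmul]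
    have hco : coeff (d (j + k) j) (phi (c.sum fun i a => a • g n r i)) = c (j, k) := by
      rw [hphi, MvPolynomial.coeff_sum]
      have : ∀ s ∈ c.support,
          coeff (d (j + k) j) (c s • phi (g n r s))
            = if s = (j, k) then c s else 0 := by
        intro s _
        rw [MvPolynomial.coeff_smul, coeff_phi_g hr0 hr1 hrec j k hjk s]
        split_ifs <;> simp
      rw [Finset.sum_congr rfl this]
      by_cases hmem : ((j, k) : ℕ × ℕ) ∈ c.support
      · rw [Finset.sum_ite_eq' c.support ((j, k) : ℕ × ℕ) (fun s => c s), if_pos hmem]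
      · rw [Finset.sum_ite_eq' c.support ((j, k) : ℕ × ℕ) (fun s => c s), if_neg hmem]
        exact (Finsupp.notMem_support_iff.mp hmem).symm
    have hz := coeff_I _ hI (j + k) j (by omega) (by omega)
    rw [hco] at hz
    exact hz
  rw [Finsupp.sum]
  apply Finset.sum_eq_zero
  rintro ⟨j, k⟩ hs
  by_cases hb : j + k ≤ n
  · rw [key j k hb, zero_smul]
  · simp [g, hb]
end KerAux

/-- **Kernel of `μ : ℤ[e₁,e₂] → ℤ[z₁,z₂]/(z₁^{n+1}, z₂^{n+1})` (from Theorem 8.4 of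
Boote–Ray).**  Here `ℤ[e₁,e₂]` is realised as `MvPolynomial (Fin 2) ℤ` with `e₁ = X 0`,
`e₂ = X 1`, and likewise `z₁ = X 0`, `z₂ = X 1` in a second copy.  The power sum
polynomials `r_k` satisfy `r₀ = 2`, `r₁ = e₁` and `r_{k+2} = e₁ r_{k+1} − e₂ r_k`
(so that `r_k(z₁+z₂, z₁z₂) = z₁^k + z₂^k`).  If `μ(e₁) = z₁ + z₂` and `μ(e₂) = z₁z₂`,
then `ker μ` is the ideal generated by `e₂^{n+1}`, `r_{n+1}` and `r_{n+2}`. -/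
theorem ker_of_invariants_map (n : ℕ) (hn : 1 ≤ n)
    (r : ℕ → MvPolynomial (Fin 2) ℤ)
    (hr0 : r 0 = 2) (hr1 : r 1 = X 0)
    (hrec : ∀ k : ℕ, r (k + 2) = X 0 * r (k + 1) - X 1 * r k)
    (μ : MvPolynomial (Fin 2) ℤ →+*
      (MvPolynomial (Fin 2) ℤ ⧸
        Ideal.span ({X 0 ^ (n + 1), X 1 ^ (n + 1)} : Set (MvPolynomial (Fin 2) ℤ))))
    (h1 : μ (X 0) = Ideal.Quotient.mk _ (X 0 + X 1))
    (h2 : μ (X 1) = Ideal.Quotient.mk _ (X 0 * X 1)) :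
    RingHom.ker μ =
      Ideal.span ({X 1 ^ (n + 1), r (n + 1), r (n + 2)} : Set (MvPolynomial (Fin 2) ℤ)) := by
  classical
  have hX0I : (X 0 : MvPolynomial (Fin 2) ℤ) ^ (n + 1) ∈
      Ideal.span ({X 0 ^ (n + 1), X 1 ^ (n + 1)} : Set (MvPolynomial (Fin 2) ℤ)) :=
    Ideal.subset_span (by simp)
  have hX1I : (X 1 : MvPolynomial (Fin 2) ℤ) ^ (n + 1) ∈
      Ideal.span ({X 0 ^ (n + 1), X 1 ^ (n + 1)} : Set (MvPolynomial (Fin 2) ℤ)) :=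
    Ideal.subset_span (by simp)
  have hXJ : (X 1 : MvPolynomial (Fin 2) ℤ) ^ (n + 1) ∈
      Ideal.span ({X 1 ^ (n + 1), r (n + 1), r (n + 2)} : Set (MvPolynomial (Fin 2) ℤ)) :=
    Ideal.subset_span (by simp)
  have hJ1 : r (n + 1) ∈
      Ideal.span ({X 1 ^ (n + 1), r (n + 1), r (n + 2)} : Set (MvPolynomial (Fin 2) ℤ)) :=
    Ideal.subset_span (by simp)
  have hJ2 : r (n + 2) ∈
      Ideal.span ({X 1 ^ (n + 1), r (n + 1), r (n + 2)} : Set (MvPolynomial (Fin 2) ℤ)) :=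
    Ideal.subset_span (by simp)
  have hμ : ∀ p, μ p = Ideal.Quotient.mk _ (KerAux.phi p) := by
    have : μ = (Ideal.Quotient.mk _).comp (KerAux.phi.toRingHom) := by
      apply MvPolynomial.ringHom_ext
      · intro a
        have := RingHom.congr_fun
          (Subsingleton.elim (μ.comp MvPolynomial.C)
            (((Ideal.Quotient.mk _).comp (KerAux.phi.toRingHom)).comp MvPolynomial.C)) a
        simpa using this
      · intro i
        fin_cases i
        · simpa [KerAux.phi_X0] using h1
        · simpa [KerAux.phi_X1] using h2
    intro p
    rw [this]
    rfl
  have hphiJ : ∀ p ∈ Ideal.span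
      ({X 1 ^ (n + 1), r (n + 1), r (n + 2)} : Set (MvPolynomial (Fin 2) ℤ)),
      KerAux.phi p ∈
        Ideal.span ({X 0 ^ (n + 1), X 1 ^ (n + 1)} : Set (MvPolynomial (Fin 2) ℤ)) := by
    intro p hp
    have hle : Ideal.span ({X 1 ^ (n + 1), r (n + 1), r (n + 2)} :
          Set (MvPolynomial (Fin 2) ℤ)) ≤
        Ideal.comap (KerAux.phi.toRingHom)
          (Ideal.span ({X 0 ^ (n + 1), X 1 ^ (n + 1)} : Set (MvPolynomial (Fin 2) ℤ))) := by
      rw [Ideal.span_le]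
      rintro q hq
      simp only [Set.mem_insert_iff, Set.mem_singleton_iff] at hq
      rcases hq with rfl | rfl | rfl <;> rw [SetLike.mem_coe, Ideal.mem_comap]
      · show KerAux.phi (X 1 ^ (n + 1)) ∈ _
        rw [map_pow, KerAux.phi_X1, mul_pow]
        exact Ideal.mul_mem_right _ _ hX0I
      · show KerAux.phi (r (n + 1)) ∈ _
        rw [KerAux.phi_r hr0 hr1 hrec (n + 1)]
        exact add_mem hX0I hX1I
      · show KerAux.phi (r (n + 2)) ∈ _
        rw [KerAux.phi_r hr0 hr1 hrec (n + 2)]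
        have : (X 0 : MvPolynomial (Fin 2) ℤ) ^ (n + 2) + X 1 ^ (n + 2)
            = X 0 * X 0 ^ (n + 1) + X 1 * X 1 ^ (n + 1) := by ring
        rw [this]
        exact add_mem (Ideal.mul_mem_left _ _ hX0I) (Ideal.mul_mem_left _ _ hX1I)
    exact hle hp
  ext p
  rw [RingHom.mem_ker, hμ p, Ideal.Quotient.eq_zero_iff_mem]
  constructor
  · intro hp
    obtain ⟨y, hy, z, hz, hyz⟩ :=
      Submodule.mem_sup.mp (KerAux.span_top hrec hr0 hr1 _ hXJ hJ1 hJ2 p)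
    have hyJ : y ∈ Ideal.span
        ({X 1 ^ (n + 1), r (n + 1), r (n + 2)} : Set (MvPolynomial (Fin 2) ℤ)) := hy
    have hphz : KerAux.phi z ∈
        Ideal.span ({X 0 ^ (n + 1), X 1 ^ (n + 1)} : Set (MvPolynomial (Fin 2) ℤ)) := by
      have hz' : z = p - y := by rw [← hyz]; ring
      rw [hz', map_sub]
      exact sub_mem hp (hphiJ y hyJ)
    have hz0 : z = 0 := KerAux.inj_part hr0 hr1 hrec z hz hphz
    rw [← hyz, hz0, add_zero]
    exact hyJ
  · intro hp
    exact hphiJ p hp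
end

section
/- Let e = 1 or e = 2, and let n ≥ 1. Define the polynomials r_k ∈ ℤ[m, y] by r₀ = 2, r₁ = m, r_{k+2} = m·r_{k+1} − y·r_k. Let A_n = ℤ[c, m, y]/(2c, c·m, r_{n+1}(m,y), r_{n+2}(m,y), y^{n+1}) and B_n = ℤ[c, z]/(2c, z^{n+1}), and let φ_n : A_n → B_n be the ring homomorphism determined by φ_n(c) = c, φ_n(m) = 2z, and φ_n(y) = (c^e + z)·z (this is well defined: modulo (2c), r_k(2z, (c^e+z)z) = 2z^k, so the generators of the ideal defining A_n map into the ideal defining B_n). Then for n ≥ 2 the kernel of φ_n is the principal ideal of A_n generated by m² − 4y, while for n = 1 it is the principal ideal generated by 2y. -/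
set_option maxHeartbeats 1600000
set_option synthInstance.maxHeartbeats 400000

open MvPolynomial

noncomputable section BRaux

abbrev BR3 : Type := MvPolynomial (Fin 3) ℤ
abbrev BR2 : Type := MvPolynomial (Fin 2) ℤ
abbrev BP2 : Type := Polynomial (Polynomial (ZMod 2))

def brψ (e : ℕ) : BR3 →+* BR2 :=
  (aeval ![X 0, 2 * X 1, (X 0 ^ e + X 1) * X 1] : BR3 →ₐ[ℤ] BR2).toRingHom
def brA1 : Polynomial ℤ →+* BR3 := Polynomial.eval₂RingHom MvPolynomial.C (X 2)
def brAc : Polynomial ℤ →+* BR3 := Polynomial.eval₂RingHom MvPolynomial.C (X 0)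
def brA2 : Polynomial (Polynomial ℤ) →+* BR3 := Polynomial.eval₂RingHom brAc (X 2)
def brε : BR2 →+* Polynomial ℤ := (aeval ![0, Polynomial.X] : BR2 →ₐ[ℤ] Polynomial ℤ).toRingHom
def brρ : BR2 →+* BP2 :=
  (aeval ![Polynomial.C Polynomial.X, Polynomial.X] : BR2 →ₐ[ℤ] BP2).toRingHom
def brg1 : Polynomial ℤ →+* Polynomial (ZMod 2) := Polynomial.mapRingHom (Int.castRingHom (ZMod 2))
def brw (e : ℕ) : BP2 := (Polynomial.C Polynomial.X ^ e + Polynomial.X) * Polynomial.X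
def brΘ (e : ℕ) : Polynomial (Polynomial ℤ) →+* BP2 :=
  Polynomial.eval₂RingHom ((Polynomial.C : Polynomial (ZMod 2) →+* BP2).comp brg1) (brw e)

lemma br_theta (e : ℕ) (he : 1 ≤ e) :
    ∀ (N : ℕ) (Q : BP2), Q.natDegree < N →
      (Polynomial.X : BP2) ^ N ∣
        Polynomial.eval₂ Polynomial.C
          ((Polynomial.C Polynomial.X ^ e + Polynomial.X) * Polynomial.X) Q →
      Q = 0 := by
  set u : BP2 := Polynomial.C Polynomial.X ^ e + Polynomial.X with hu
  have hXu : ¬ (Polynomial.X : BP2) ∣ u := by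
    rw [Polynomial.X_dvd_iff]
    have h0 : u.coeff 0 = Polynomial.X ^ e := by simp [hu, ← map_pow]
    rw [h0]
    exact pow_ne_zero e Polynomial.X_ne_zero
  intro N
  induction N with
  | zero => intro Q h; exact absurd h (Nat.not_lt_zero _)
  | succ N ih =>
    intro Q hdeg hdvd
    by_cases hQz : Q = 0
    · exact hQz
    have hkey : Polynomial.eval₂ Polynomial.C (u * Polynomial.X) Q =
        (u * Polynomial.X) * Polynomial.eval₂ Polynomial.C (u * Polynomial.X) Q.divX
          + Polynomial.C (Q.coeff 0) := by
      conv_lhs => rw [← Q.X_mul_divX_add]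
      rw [Polynomial.eval₂_add, Polynomial.eval₂_mul, Polynomial.eval₂_X, Polynomial.eval₂_C]
    have hc0 : (Polynomial.eval₂ Polynomial.C (u * Polynomial.X) Q).coeff 0 = 0 := by
      rw [← Polynomial.X_dvd_iff]
      exact dvd_trans (dvd_pow_self _ (Nat.succ_ne_zero N)) hdvd
    have hQ0 : Q.coeff 0 = 0 := by
      have := congrArg (fun p => Polynomial.coeff p 0) hkey
      simp only [hc0, Polynomial.coeff_add, Polynomial.mul_coeff_zero,
        Polynomial.coeff_X_zero, mul_zero, zero_add, Polynomial.coeff_C] at this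
      simpa using this.symm
    have hQX : Q = Polynomial.X * Q.divX := by
      conv_lhs => rw [← Q.X_mul_divX_add]
      rw [hQ0, map_zero, add_zero]
    -- extract divisibility for divX
    obtain ⟨s, hs⟩ := hdvd
    rw [hkey, hQ0, map_zero, add_zero] at hs
    have hcan : u * Polynomial.eval₂ Polynomial.C (u * Polynomial.X) Q.divX
        = Polynomial.X ^ N * s := by
      apply mul_left_cancel₀ (Polynomial.X_ne_zero (R := Polynomial (ZMod 2)))
      calc Polynomial.X * (u * Polynomial.eval₂ Polynomial.C (u * Polynomial.X) Q.divX)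
          = u * Polynomial.X * Polynomial.eval₂ Polynomial.C (u * Polynomial.X) Q.divX := by ring
        _ = Polynomial.X ^ (N + 1) * s := hs
        _ = Polynomial.X * (Polynomial.X ^ N * s) := by ring
    have hdvd' : (Polynomial.X : BP2) ^ N ∣
        Polynomial.eval₂ Polynomial.C (u * Polynomial.X) Q.divX :=
      (Polynomial.prime_X).pow_dvd_of_dvd_mul_left N hXu ⟨s, hcan⟩
    have hdegX : Q.divX.natDegree < N := by
      have h1 : Q.divX.natDegree = Q.natDegree - 1 := Polynomial.natDegree_divX_eq_natDegree_tsub_one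
      by_cases h0 : Q.natDegree = 0
      · exfalso
        apply hQz
        rw [Polynomial.eq_C_of_natDegree_eq_zero h0, hQ0, map_zero]
      · omega
    have := ih Q.divX hdegX hdvd'
    rw [hQX, this, mul_zero]


lemma brA1_X : brA1 Polynomial.X = X 2 := by simp [brA1]
lemma brA1_C (a : ℤ) : brA1 (Polynomial.C a) = C a := by simp [brA1]
lemma brA2_X : brA2 Polynomial.X = X 2 := by simp [brA2]
lemma brA2_C (p : Polynomial ℤ) : brA2 (Polynomial.C p) = brAc p := by simp [brA2]
lemma brA2_CX : brA2 (Polynomial.C Polynomial.X) = X 0 := by simp [brA2, brAc]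

lemma brA2_mapC (F : Polynomial ℤ) : brA2 (F.map Polynomial.C) = brA1 F := by
  have h : brA2.comp (Polynomial.mapRingHom (Polynomial.C : ℤ →+* Polynomial ℤ)) = brA1 := by
    apply Polynomial.ringHom_ext
    · intro a
      simp [brA2, brA1, brAc]
    · simp [brA2_X, brA1_X]
  exact DFunLike.congr_fun h F

lemma br_NF (p : BR3) : ∃ (F G : Polynomial ℤ) (H : Polynomial (Polynomial ℤ)),
    p - (brA1 F + X 1 * brA1 G + X 0 * brA2 H) ∈
      Ideal.span ({X 0 * X 1, X 1 ^ 2 - 4 * X 2} : Set BR3) := by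
  induction p using MvPolynomial.induction_on with
  | C a =>
    refine ⟨Polynomial.C a, 0, 0, ?_⟩
    rw [brA1_C]
    simp
  | add p q hp hq =>
    obtain ⟨F1, G1, H1, h1⟩ := hp
    obtain ⟨F2, G2, H2, h2⟩ := hq
    refine ⟨F1 + F2, G1 + G2, H1 + H2, ?_⟩
    have : p + q - (brA1 (F1+F2) + X 1 * brA1 (G1+G2) + X 0 * brA2 (H1+H2))
        = (p - (brA1 F1 + X 1 * brA1 G1 + X 0 * brA2 H1))
          + (q - (brA1 F2 + X 1 * brA1 G2 + X 0 * brA2 H2)) := by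
      simp only [map_add]; ring
    rw [this]
    exact Ideal.add_mem _ h1 h2
  | mul_X p i hp =>
    obtain ⟨F, G, H, h⟩ := hp
    fin_cases i
    · refine ⟨0, 0, F.map Polynomial.C + Polynomial.C Polynomial.X * H, ?_⟩
      show p * X 0 - _ ∈ _
      have : p * X 0 - (brA1 0 + X 1 * brA1 0 +
            X 0 * brA2 (F.map Polynomial.C + Polynomial.C Polynomial.X * H))
          = (p - (brA1 F + X 1 * brA1 G + X 0 * brA2 H)) * X 0
            + brA1 G * (X 0 * X 1) := by
        rw [map_add, brA2_mapC, map_mul, brA2_CX, map_zero]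
        ring
      rw [this]
      refine Ideal.add_mem _ (Ideal.mul_mem_right _ _ h) (Ideal.mul_mem_left _ _ ?_)
      exact Ideal.subset_span (by simp)
    · refine ⟨Polynomial.C 4 * (Polynomial.X * G), F, 0, ?_⟩
      show p * X 1 - _ ∈ _
      have : p * X 1 - (brA1 (Polynomial.C 4 * (Polynomial.X * G)) + X 1 * brA1 F
            + X 0 * brA2 0)
          = (p - (brA1 F + X 1 * brA1 G + X 0 * brA2 H)) * X 1
            + brA1 G * (X 1 ^ 2 - 4 * X 2) + brA2 H * (X 0 * X 1) := by
        rw [map_mul, map_mul, brA1_C, brA1_X, map_zero,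
          show (C (4:ℤ) : BR3) = 4 from map_ofNat _ 4]
        ring
      rw [this]
      refine Ideal.add_mem _ (Ideal.add_mem _ (Ideal.mul_mem_right _ _ h)
        (Ideal.mul_mem_left _ _ ?_)) (Ideal.mul_mem_left _ _ ?_)
      · exact Ideal.subset_span (by simp)
      · exact Ideal.subset_span (by simp)
    · refine ⟨F * Polynomial.X, G * Polynomial.X, H * Polynomial.X, ?_⟩
      show p * X 2 - _ ∈ _
      have : p * X 2 - (brA1 (F * Polynomial.X) + X 1 * brA1 (G * Polynomial.X)
            + X 0 * brA2 (H * Polynomial.X))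
          = (p - (brA1 F + X 1 * brA1 G + X 0 * brA2 H)) * X 2 := by
        rw [map_mul, map_mul, map_mul, brA1_X, brA2_X]
        ring
      rw [this]
      exact Ideal.mul_mem_right _ _ h

lemma brψ_X0 (e : ℕ) : brψ e (X 0) = X 0 := by simp [brψ]
lemma brψ_X1 (e : ℕ) : brψ e (X 1) = 2 * X 1 := by simp [brψ]
lemma brψ_X2 (e : ℕ) : brψ e (X 2) = (X 0 ^ e + X 1) * X 1 := by simp [brψ]

lemma brε_X0 : brε (X 0) = 0 := by simp [brε]
lemma brε_X1 : brε (X 1) = Polynomial.X := by simp [brε]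
lemma brρ_X0 : brρ (X 0) = Polynomial.C Polynomial.X := by simp [brρ]
lemma brρ_X1 : brρ (X 1) = Polynomial.X := by simp [brρ]

lemma br_two_eq_zero : (2 : BP2) = 0 := by
  rw [← map_ofNat (Polynomial.C : Polynomial (ZMod 2) →+* BP2) 2,
    ← map_ofNat (Polynomial.C : (ZMod 2) →+* Polynomial (ZMod 2)) 2]
  norm_num
  rfl

lemma brεψA1 (e : ℕ) (he : 1 ≤ e) (F : Polynomial ℤ) :
    brε (brψ e (brA1 F)) = Polynomial.expand ℤ 2 F := by
  have h : brε.comp ((brψ e).comp brA1) =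
      ((Polynomial.expand ℤ 2 : Polynomial ℤ →ₐ[ℤ] Polynomial ℤ) : Polynomial ℤ →+* Polynomial ℤ) := by
    apply Polynomial.ringHom_ext
    · intro a
      simp [brε, brψ, brA1]
    · simp only [RingHom.coe_comp, Function.comp_apply, Polynomial.coe_eval₂RingHom, brA1,
        Polynomial.eval₂_X, AlgHom.coe_toRingHom, Polynomial.expand_X]
      rw [brψ_X2]
      simp [brε, zero_pow (by omega : e ≠ 0), sq]
  exact DFunLike.congr_fun h F

lemma brρψA2 (e : ℕ) (H : Polynomial (Polynomial ℤ)) :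
    brρ (brψ e (brA2 H)) = brΘ e H := by
  have h : brρ.comp ((brψ e).comp brA2) = (brΘ e : Polynomial (Polynomial ℤ) →+* BP2) := by
    apply Polynomial.ringHom_ext
    · intro p
      simp only [RingHom.coe_comp, Function.comp_apply, brA2, Polynomial.coe_eval₂RingHom,
        Polynomial.eval₂_C, brΘ]
      -- inner : ring homs on Polynomial ℤ
      have h2 : brρ.comp ((brψ e).comp brAc) =
          (Polynomial.C : Polynomial (ZMod 2) →+* BP2).comp brg1 := by
        apply Polynomial.ringHom_ext
        · intro a
          simp [brρ, brψ, brAc, brg1]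
        · simp only [RingHom.coe_comp, Function.comp_apply, brAc, Polynomial.coe_eval₂RingHom,
            Polynomial.eval₂_X, brg1]
          rw [brψ_X0, brρ_X0]
          simp
      exact DFunLike.congr_fun h2 p
    · simp only [RingHom.coe_comp, Function.comp_apply, brA2, Polynomial.coe_eval₂RingHom,
        Polynomial.eval₂_X, brΘ]
      rw [brψ_X2]
      simp [brρ, brw]
  exact DFunLike.congr_fun h H

lemma brρψA1 (e : ℕ) (F : Polynomial ℤ) :
    brρ (brψ e (brA1 F)) = brΘ e (F.map Polynomial.C) := by
  have h1 : brA1 F = brA2 (F.map Polynomial.C) := by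
    have h : brA2.comp (Polynomial.mapRingHom (Polynomial.C : ℤ →+* Polynomial ℤ)) = brA1 := by
      apply Polynomial.ringHom_ext
      · intro a; simp [brA2, brA1, brAc]
      · simp [brA2, brA1]
    exact (DFunLike.congr_fun h F).symm
  rw [h1, brρψA2]

lemma brΘ_eq (e : ℕ) (Q : Polynomial (Polynomial ℤ)) :
    brΘ e Q = Polynomial.eval₂ Polynomial.C (brw e) (Q.map brg1) := by
  rw [Polynomial.eval₂_map]
  rfl

-- truncation helper
lemma br_trunc {R : Type*} [CommRing R] [Nontrivial R] (n : ℕ) (F : Polynomial R) :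
    ∃ Fl Fh : Polynomial R, F = Fl + Polynomial.X ^ (n+1) * Fh ∧ Fl.natDegree ≤ n := by
  refine ⟨F %ₘ (Polynomial.X ^ (n+1)), F /ₘ (Polynomial.X ^ (n+1)), ?_, ?_⟩
  · conv_lhs => rw [← Polynomial.modByMonic_add_div F (Polynomial.X ^ (n+1))]
  · by_cases h0 : F %ₘ (Polynomial.X ^ (n+1)) = 0
    · simp [h0]
    · have h := Polynomial.degree_modByMonic_lt F (Polynomial.monic_X_pow (n+1) (R := R))
      rw [Polynomial.degree_X_pow] at h
      have := (Polynomial.natDegree_lt_iff_degree_lt h0).mpr h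
      omega

-- the two families of structural lemmas about r
lemma br_psi_r (e' n : ℕ) (r : ℕ → BR3)
    (hr0 : r 0 = 2) (hr1 : r 1 = X 1)
    (hrec : ∀ k, r (k+2) = X 1 * r (k+1) - X 2 * r k) :
    ∀ k : ℕ, (∃ u, brψ (e'+1) (r k) = 2 * X 1 ^ k + (2 * X 0) * u) ∧
      (∃ u, brψ (e'+1) (r (k+1)) = 2 * X 1 ^ (k+1) + (2 * X 0) * u) := by
  intro k
  induction k with
  | zero =>
    constructor
    · exact ⟨0, by rw [hr0, map_ofNat]; simp⟩
    · exact ⟨0, by rw [hr1, brψ_X1]; ring⟩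
  | succ k ih =>
    refine ⟨ih.2, ?_⟩
    obtain ⟨u₀, hu₀⟩ := ih.1
    obtain ⟨u₁, hu₁⟩ := ih.2
    refine ⟨2 * X 1 * u₁ - X 0 ^ e' * X 1 ^ (k+1) - (X 0 ^ (e'+1) + X 1) * X 1 * u₀, ?_⟩
    rw [hrec k, map_sub, map_mul, map_mul, brψ_X1, brψ_X2, hu₁, hu₀]
    ring

lemma br_r_modD (n : ℕ) (r : ℕ → BR3)
    (hr0 : r 0 = 2) (hr1 : r 1 = X 1)
    (hrec : ∀ k, r (k+2) = X 1 * r (k+1) - X 2 * r k) :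
    ∀ j : ℕ, (∃ u, r (2*j) = 2 * X 2 ^ j + (X 1 ^ 2 - 4 * X 2) * u) ∧
      (∃ v, r (2*j+1) = X 1 * X 2 ^ j + (X 1 ^ 2 - 4 * X 2) * v) := by
  intro j
  induction j with
  | zero =>
    constructor
    · exact ⟨0, by rw [show 2*0 = 0 from rfl, hr0]; simp⟩
    · exact ⟨0, by rw [show 2*0+1 = 1 from rfl, hr1]; simp⟩
  | succ j ih =>
    obtain ⟨⟨u, hu⟩, ⟨v, hv⟩⟩ := ih
    have h1 : r (2*(j+1)) = 2 * X 2 ^ (j+1) + (X 1 ^ 2 - 4 * X 2) * (X 2 ^ j + X 1 * v - X 2 * u) := by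
      rw [(by ring : 2*(j+1) = 2*j+2), hrec (2*j), hv, hu]
      ring
    refine ⟨⟨_, h1⟩, ?_⟩
    refine ⟨X 1 * (X 2 ^ j + X 1 * v - X 2 * u) - X 2 * v, ?_⟩
    rw [(by ring : 2*(j+1)+1 = (2*j+1)+2), hrec (2*j+1), (by ring : 2*j+1+1 = 2*(j+1)), h1, hv]
    ring


theorem brKey (e' n : ℕ) (hn : 1 ≤ n) (r : ℕ → BR3)
    (hr0 : r 0 = 2) (hr1 : r 1 = X 1)
    (hrec : ∀ k, r (k+2) = X 1 * r (k+1) - X 2 * r k) :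
    Ideal.comap (brψ (e'+1)) (Ideal.span ({2 * X 0, X 1 ^ (n+1)} : Set BR2)) =
    Ideal.span (insert (X 1 ^ 2 - 4 * X 2)
      ({2 * X 0, X 0 * X 1, r (n+1), r (n+2), X 2 ^ (n+1)} : Set BR3)) := by
  set D : BR3 := X 1 ^ 2 - 4 * X 2 with hD
  set S : Set BR3 := {2 * X 0, X 0 * X 1, r (n+1), r (n+2), X 2 ^ (n+1)} with hS
  set L : Ideal BR3 := Ideal.span (insert D S) with hL
  set IB : Ideal BR2 := Ideal.span ({2 * X 0, X 1 ^ (n+1)} : Set BR2) with hIB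
  have hDL : D ∈ L := Ideal.subset_span (Set.mem_insert _ _)
  have h2c : 2 * X 0 ∈ L := Ideal.subset_span (by simp [S])
  have hcm : X 0 * X 1 ∈ L := Ideal.subset_span (by simp [S])
  have hrn1 : r (n+1) ∈ L := Ideal.subset_span (by simp [S])
  have hrn2 : r (n+2) ∈ L := Ideal.subset_span (by simp [S])
  have hyn : X 2 ^ (n+1) ∈ L := Ideal.subset_span (by simp [S])
  -- the auxiliary elements 2 y^a and m y^b of L
  have hL2 : 2 * X 2 ^ (n/2 + 1) ∈ L := by
    rcases Nat.even_or_odd n with ⟨k, hk⟩ | ⟨k, hk⟩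
    · obtain ⟨u, hu⟩ := (br_r_modD n r hr0 hr1 hrec (k+1)).1
      rw [(by omega : 2*(k+1) = n+2)] at hu
      have : 2 * X 2 ^ (n/2+1) = r (n+2) - D * u := by
        rw [hu, (by omega : n/2+1 = k+1)]; ring
      rw [this]; exact sub_mem hrn2 (Ideal.mul_mem_right _ _ hDL)
    · obtain ⟨u, hu⟩ := (br_r_modD n r hr0 hr1 hrec (k+1)).1
      rw [(by omega : 2*(k+1) = n+1)] at hu
      have : 2 * X 2 ^ (n/2+1) = r (n+1) - D * u := by
        rw [hu, (by omega : n/2+1 = k+1)]; ring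
      rw [this]; exact sub_mem hrn1 (Ideal.mul_mem_right _ _ hDL)
  have hL3 : X 1 * X 2 ^ ((n+1)/2) ∈ L := by
    rcases Nat.even_or_odd n with ⟨k, hk⟩ | ⟨k, hk⟩
    · obtain ⟨v, hv⟩ := (br_r_modD n r hr0 hr1 hrec k).2
      rw [(by omega : 2*k+1 = n+1)] at hv
      have : X 1 * X 2 ^ ((n+1)/2) = r (n+1) - D * v := by
        rw [hv, (by omega : (n+1)/2 = k)]; ring
      rw [this]; exact sub_mem hrn1 (Ideal.mul_mem_right _ _ hDL)
    · obtain ⟨v, hv⟩ := (br_r_modD n r hr0 hr1 hrec (k+1)).2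
      rw [(by omega : 2*(k+1)+1 = n+2)] at hv
      have : X 1 * X 2 ^ ((n+1)/2) = r (n+2) - D * v := by
        rw [hv, (by omega : (n+1)/2 = k+1)]; ring
      rw [this]; exact sub_mem hrn2 (Ideal.mul_mem_right _ _ hDL)
  -- easy inclusion
  have hEasy : L ≤ Ideal.comap (brψ (e'+1)) IB := by
    rw [hL, Ideal.span_le]
    intro x hx
    simp only [hS, Set.mem_insert_iff] at hx
    rw [SetLike.mem_coe, Ideal.mem_comap, hIB, Ideal.mem_span_pair]
    rcases hx with rfl | rfl | rfl | rfl | rfl | rfl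
    · refine ⟨-(2 * X 0 ^ e' * X 1), 0, ?_⟩
      rw [hD, map_sub, map_pow, map_mul, map_ofNat, brψ_X1, brψ_X2]
      ring
    · exact ⟨1, 0, by rw [map_mul, map_ofNat, brψ_X0]; ring⟩
    · exact ⟨X 1, 0, by rw [map_mul, brψ_X0, brψ_X1]; ring⟩
    · obtain ⟨u, hu⟩ := (br_psi_r e' n r hr0 hr1 hrec (n+1)).1
      exact ⟨u, 2, by rw [hu]; ring⟩
    · obtain ⟨u, hu⟩ := (br_psi_r e' n r hr0 hr1 hrec (n+1)).2
      exact ⟨u, 2 * X 1, by rw [hu]; ring⟩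
    · refine ⟨0, (X 0 ^ (e'+1) + X 1) ^ (n+1), ?_⟩
      rw [map_pow, brψ_X2]
      rw [mul_pow]
      ring
  refine le_antisymm ?_ hEasy
  intro p hp
  rw [Ideal.mem_comap] at hp
  -- normal form
  obtain ⟨F0, G, H0, hNF⟩ := br_NF p
  obtain ⟨F, Fh, hF0, hFdeg⟩ := br_trunc n F0
  obtain ⟨H, Hh, hH0, hHdeg⟩ := br_trunc n H0
  set q : BR3 := brA1 F + X 1 * brA1 G + X 0 * brA2 H with hq
  have hpqL : p - q ∈ L := by
    have h1 : p - q = (p - (brA1 F0 + X 1 * brA1 G + X 0 * brA2 H0))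
        + (X 2 ^ (n+1) * brA1 Fh + X 0 * (X 2 ^ (n+1) * brA2 Hh)) := by
      rw [hq, hF0, hH0, map_add, map_add, map_mul, map_mul, map_pow, map_pow, brA1_X, brA2_X]
      ring
    rw [h1]
    refine add_mem ?_ (add_mem (Ideal.mul_mem_right _ _ hyn)
      (Ideal.mul_mem_left _ _ (Ideal.mul_mem_right _ _ hyn)))
    refine Ideal.span_le.mpr ?_ hNF
    intro x hx
    simp only [Set.mem_insert_iff, Set.mem_singleton_iff] at hx
    rcases hx with rfl | rfl
    · exact hcm
    · exact hDL
  have hqIB : brψ (e'+1) q ∈ IB := by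
    have h1 : brψ (e'+1) (p - q) ∈ IB := hEasy hpqL
    have h2 : brψ (e'+1) q = brψ (e'+1) p - brψ (e'+1) (p - q) := by
      rw [map_sub]; ring
    rw [h2]; exact sub_mem hp h1
  obtain ⟨u, v, huv⟩ := Ideal.mem_span_pair.mp hqIB
  -- the ε condition
  have hεq : brε (brψ (e'+1) q) = Polynomial.expand ℤ 2 F
      + Polynomial.C 2 * (Polynomial.X * Polynomial.expand ℤ 2 G) := by
    rw [hq, map_add, map_add, map_mul, map_mul, map_add, map_add, map_mul, map_mul,
      brεψA1 _ (by omega), brεψA1 _ (by omega), brψ_X0, brψ_X1, brε_X0,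
      map_mul, map_ofNat, brε_X1, show (Polynomial.C (2:ℤ)) = 2 from map_ofNat _ 2]
    ring
  have hε : (Polynomial.X : Polynomial ℤ) ^ (n+1) ∣
      (Polynomial.expand ℤ 2 F + Polynomial.C 2 * (Polynomial.X * Polynomial.expand ℤ 2 G)) := by
    refine ⟨brε v, ?_⟩
    have h1 := congrArg brε huv
    simp only [map_add, map_mul, map_pow, map_ofNat, brε_X0, brε_X1, mul_zero, zero_add] at h1
    rw [← hεq, ← h1]
    ring
  have hcoe := Polynomial.X_pow_dvd_iff.mp hε
  have hFlow : ∀ i, i < n/2 + 1 → F.coeff i = 0 := by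
    intro i hi
    have h := hcoe (2*i) (by omega)
    have e1 : (Polynomial.expand ℤ 2 F).coeff (2*i) = F.coeff i := by
      rw [Polynomial.coeff_expand (by norm_num), if_pos (dvd_mul_right 2 i),
        Nat.mul_div_cancel_left i (by norm_num)]
    have e2 : (Polynomial.X * Polynomial.expand ℤ 2 G).coeff (2*i) = 0 := by
      cases i with
      | zero => simp
      | succ j =>
        rw [(by ring : 2*(j+1) = (2*j+1)+1), Polynomial.coeff_X_mul,
          Polynomial.coeff_expand (by norm_num), if_neg (by omega)]
    rw [Polynomial.coeff_add, e1, Polynomial.coeff_C_mul, e2, mul_zero, add_zero] at h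
    exact h
  have hGlow : ∀ i, i < (n+1)/2 → G.coeff i = 0 := by
    intro i hi
    have h := hcoe (2*i+1) (by omega)
    have e1 : (Polynomial.expand ℤ 2 F).coeff (2*i+1) = 0 := by
      rw [Polynomial.coeff_expand (by norm_num), if_neg (by omega)]
    have e2 : (Polynomial.X * Polynomial.expand ℤ 2 G).coeff (2*i+1) = G.coeff i := by
      rw [Polynomial.coeff_X_mul, Polynomial.coeff_expand (by norm_num),
        if_pos (dvd_mul_right 2 i), Nat.mul_div_cancel_left i (by norm_num)]
    rw [Polynomial.coeff_add, e1, Polynomial.coeff_C_mul, e2, zero_add] at h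
    omega
  -- the mod 2 condition
  set Q : Polynomial (Polynomial ℤ) := F.map Polynomial.C + Polynomial.C Polynomial.X * H with hQ
  have hρq : brρ (brψ (e'+1) q) = brΘ (e'+1) Q := by
    rw [hq, map_add, map_add, map_mul, map_mul, map_add, map_add, map_mul, map_mul,
      brρψA1, brρψA2, brψ_X0, brψ_X1, brρ_X0, map_mul, map_ofNat, brρ_X1,
      br_two_eq_zero, hQ, map_add, map_mul]
    have hCX : brΘ (e'+1) (Polynomial.C Polynomial.X) = Polynomial.C Polynomial.X := by
      simp [brΘ, brg1]
    rw [hCX]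
    ring
  have hΘdvd : (Polynomial.X : BP2) ^ (n+1) ∣
      Polynomial.eval₂ Polynomial.C (brw (e'+1)) (Q.map brg1) := by
    refine ⟨brρ v, ?_⟩
    have h1 := congrArg brρ huv
    simp only [map_add, map_mul, map_pow, map_ofNat, brρ_X0, brρ_X1, br_two_eq_zero,
      zero_mul, mul_zero, zero_add] at h1
    rw [← brΘ_eq, ← hρq, ← h1]
    ring
  have hQdeg : (Q.map brg1).natDegree < n + 1 := by
    have h1 : Q.natDegree ≤ n := by
      refine le_trans (Polynomial.natDegree_add_le _ _) (max_le ?_ ?_)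
      · exact le_trans Polynomial.natDegree_map_le hFdeg
      · exact le_trans (Polynomial.natDegree_C_mul_le _ _) hHdeg
    have h2 : (Q.map brg1).natDegree ≤ Q.natDegree := Polynomial.natDegree_map_le
    omega
  have hQ0 : Q.map brg1 = 0 := by
    refine br_theta (e'+1) (by omega) (n+1) _ hQdeg ?_
    exact hΘdvd
  have hQc : ∀ i, brg1 (Q.coeff i) = 0 := by
    intro i
    have := congrArg (fun p => Polynomial.coeff p i) hQ0
    simpa [Polynomial.coeff_map] using this
  have hQco : ∀ i, Q.coeff i = Polynomial.C (F.coeff i) + Polynomial.X * H.coeff i := by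
    intro i
    rw [hQ, Polynomial.coeff_add, Polynomial.coeff_map, Polynomial.coeff_C_mul]
  have hF2 : ∀ i, (2:ℤ) ∣ F.coeff i := by
    intro i
    have h := hQc i
    rw [hQco i, map_add, map_mul] at h
    have h0 := congrArg (fun p => Polynomial.coeff p 0) h
    simp only [Polynomial.coeff_add, Polynomial.mul_coeff_zero, brg1,
      Polynomial.coe_mapRingHom, Polynomial.map_C, Polynomial.map_X, Polynomial.coeff_C,
      Polynomial.coeff_X_zero, zero_mul, add_zero, Polynomial.coeff_zero] at h0
    have : ((F.coeff i : ℤ) : ZMod 2) = 0 := by simpa using h0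
    exact_mod_cast (ZMod.intCast_zmod_eq_zero_iff_dvd _ 2).mp this
  have hH2 : ∀ i, brg1 (H.coeff i) = 0 := by
    intro i
    have h := hQc i
    rw [hQco i, map_add, map_mul] at h
    have hC0 : brg1 (Polynomial.C (F.coeff i)) = 0 := by
      have hcast : ((F.coeff i : ℤ) : ZMod 2) = 0 := by
        exact_mod_cast (ZMod.intCast_zmod_eq_zero_iff_dvd _ 2).mpr (hF2 i)
      simp only [brg1, Polynomial.coe_mapRingHom, Polynomial.map_C, map_intCast]
      rw [show ((Int.castRingHom (ZMod 2)) (F.coeff i)) = ((F.coeff i : ℤ) : ZMod 2) from rfl,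
        hcast, map_zero]
    rw [hC0, zero_add] at h
    have hX : brg1 (Polynomial.X : Polynomial ℤ) = Polynomial.X := by simp [brg1]
    rw [hX] at h
    rcases mul_eq_zero.mp h with h' | h'
    · exact absurd h' Polynomial.X_ne_zero
    · exact h'
  -- extract divisibility of H by 2
  have hHdvd : (2 : Polynomial (Polynomial ℤ)) ∣ H := by
    have h2 : (2 : Polynomial (Polynomial ℤ)) = Polynomial.C (Polynomial.C 2) := by
      rw [show (Polynomial.C (2:ℤ)) = 2 from map_ofNat _ 2,
        show (Polynomial.C (2: Polynomial ℤ)) = 2 from map_ofNat _ 2]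
    rw [h2, Polynomial.C_dvd_iff_dvd_coeff]
    intro i
    rw [Polynomial.C_dvd_iff_dvd_coeff]
    intro j
    have h := hH2 i
    have := congrArg (fun p => Polynomial.coeff p j) h
    simp only [brg1, Polynomial.coe_mapRingHom, Polynomial.coeff_map, Polynomial.coeff_zero] at this
    exact_mod_cast (ZMod.intCast_zmod_eq_zero_iff_dvd _ 2).mp this
  obtain ⟨H1, hH1⟩ := hHdvd
  -- F = 2 X^a F2
  obtain ⟨F1, hF1⟩ := (Polynomial.C_dvd_iff_dvd_coeff (2:ℤ) F).mpr hF2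
  have hF1low : (Polynomial.X : Polynomial ℤ) ^ (n/2+1) ∣ F1 := by
    rw [Polynomial.X_pow_dvd_iff]
    intro d hd
    have h := hFlow d hd
    rw [hF1, Polynomial.coeff_C_mul] at h
    omega
  obtain ⟨F2, hF2'⟩ := hF1low
  obtain ⟨G2, hG2⟩ := (Polynomial.X_pow_dvd_iff (f := G) (n := (n+1)/2)).mpr hGlow
  -- conclude q ∈ L
  have hqL : q ∈ L := by
    have m1 : brA1 F ∈ L := by
      have : brA1 F = brA1 F2 * (2 * X 2 ^ (n/2+1)) := by
        rw [hF1, hF2', map_mul, map_mul, map_pow, brA1_X, brA1_C,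
          show (C (2:ℤ) : BR3) = 2 from map_ofNat _ 2]
        ring
      rw [this]
      exact Ideal.mul_mem_left _ _ hL2
    have m2 : X 1 * brA1 G ∈ L := by
      have : X 1 * brA1 G = brA1 G2 * (X 1 * X 2 ^ ((n+1)/2)) := by
        rw [hG2, map_mul, map_pow, brA1_X]
        ring
      rw [this]
      exact Ideal.mul_mem_left _ _ hL3
    have m3 : X 0 * brA2 H ∈ L := by
      have : X 0 * brA2 H = (X 0 * brA2 H1) * 2 := by
        rw [hH1, map_mul, map_ofNat]
        ring
      have h2 : X 0 * brA2 H = brA2 H1 * (2 * X 0) := by rw [this]; ring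
      rw [h2]
      exact Ideal.mul_mem_left _ _ h2c
    rw [hq]
    exact add_mem (add_mem m1 m2) m3
  have : p = (p - q) + q := by ring
  rw [this]
  exact add_mem hpqL hqL

theorem brMapSpan (JAset : Set BR3) (g : BR3) :
    Ideal.map (Ideal.Quotient.mk (Ideal.span JAset)) (Ideal.span (insert g JAset)) =
    Ideal.span {Ideal.Quotient.mk (Ideal.span JAset) g} := by
  rw [Ideal.map_span]
  apply le_antisymm
  · rw [Ideal.span_le]
    rintro x ⟨y, hy, rfl⟩
    rcases Set.mem_insert_iff.mp hy with rfl | hy'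
    · exact Ideal.subset_span rfl
    · have h0 : Ideal.Quotient.mk (Ideal.span JAset) y = 0 :=
        Ideal.Quotient.eq_zero_iff_mem.mpr (Ideal.subset_span hy')
      rw [h0]
      exact zero_mem _
  · rw [Ideal.span_le]
    intro x hx
    rcases hx with rfl
    exact Ideal.subset_span ⟨g, Set.mem_insert _ _, rfl⟩

end BRaux

/-- **Kernel of the truncated restriction map `i_n*` (Proposition 8.7 of Boote–Ray).**
Here `ℤ[c,m,y]` is realised as `MvPolynomial (Fin 3) ℤ` with `c = X 0`, `m = X 1`,
`y = X 2`, and `ℤ[c,z]` as `MvPolynomial (Fin 2) ℤ` with `c = X 0`, `z = X 1`.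
The power sum polynomials `r_k = r_k(m,y)` satisfy `r₀ = 2`, `r₁ = m` and
`r_{k+2} = m r_{k+1} − y r_k`.  Let
`A_n = ℤ[c,m,y]/(2c, cm, r_{n+1}, r_{n+2}, y^{n+1})` and `B_n = ℤ[c,z]/(2c, z^{n+1})`,
and let `φ_n : A_n → B_n` be the ring homomorphism determined by `φ_n(c) = c`,
`φ_n(m) = 2z`, `φ_n(y) = (c^e + z)z`, where `e = 1` or `e = 2`.  Then for `n ≥ 2` the
kernel of `φ_n` is the principal ideal generated by `m² − 4y`, while for `n = 1` it is
the principal ideal generated by `2y`. -/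
theorem ker_of_truncated_restriction (e : ℕ) (he : e = 1 ∨ e = 2) (n : ℕ) (hn : 1 ≤ n)
    (r : ℕ → MvPolynomial (Fin 3) ℤ)
    (hr0 : r 0 = 2) (hr1 : r 1 = X 1)
    (hrec : ∀ k : ℕ, r (k + 2) = X 1 * r (k + 1) - X 2 * r k)
    (φ : (MvPolynomial (Fin 3) ℤ ⧸
            Ideal.span ({2 * X 0, X 0 * X 1, r (n + 1), r (n + 2), X 2 ^ (n + 1)} :
              Set (MvPolynomial (Fin 3) ℤ))) →+*
         (MvPolynomial (Fin 2) ℤ ⧸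
            Ideal.span ({2 * X 0, X 1 ^ (n + 1)} : Set (MvPolynomial (Fin 2) ℤ))))
    (hc : φ (Ideal.Quotient.mk _ (X 0)) = Ideal.Quotient.mk _ (X 0))
    (hm : φ (Ideal.Quotient.mk _ (X 1)) = Ideal.Quotient.mk _ (2 * X 1))
    (hy : φ (Ideal.Quotient.mk _ (X 2)) = Ideal.Quotient.mk _ ((X 0 ^ e + X 1) * X 1)) :
    (2 ≤ n → RingHom.ker φ =
        Ideal.span {Ideal.Quotient.mk _ (X 1 ^ 2 - 4 * X 2)}) ∧
    (n = 1 → RingHom.ker φ =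
        Ideal.span {Ideal.Quotient.mk _ (2 * X 2)}) := by
  have he1 : 1 ≤ e := by rcases he with rfl | rfl <;> norm_num
  obtain ⟨e', rfl⟩ : ∃ e', e = e' + 1 := ⟨e - 1, by omega⟩
  have hφmk : φ.comp (Ideal.Quotient.mk
        (Ideal.span ({2 * X 0, X 0 * X 1, r (n + 1), r (n + 2), X 2 ^ (n + 1)} :
          Set (MvPolynomial (Fin 3) ℤ)))) =
      (Ideal.Quotient.mk (Ideal.span ({2 * X 0, X 1 ^ (n + 1)} :
          Set (MvPolynomial (Fin 2) ℤ)))).comp (brψ (e'+1)) := by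
    apply MvPolynomial.ringHom_ext
    · intro a
      simp only [RingHom.coe_comp, Function.comp_apply]
      rw [show (C a : BR3) = (a : BR3) from eq_intCast MvPolynomial.C a]
      simp only [map_intCast]
    · intro i
      fin_cases i
      · show φ (Ideal.Quotient.mk _ (X 0)) = Ideal.Quotient.mk _ ((brψ (e'+1)) (X 0))
        rw [brψ_X0]
        exact hc
      · show φ (Ideal.Quotient.mk _ (X 1)) = Ideal.Quotient.mk _ ((brψ (e'+1)) (X 1))
        rw [brψ_X1]
        exact hm
      · show φ (Ideal.Quotient.mk _ (X 2)) = Ideal.Quotient.mk _ ((brψ (e'+1)) (X 2))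
        rw [brψ_X2]
        exact hy
  have hker : Ideal.comap (Ideal.Quotient.mk
        (Ideal.span ({2 * X 0, X 0 * X 1, r (n + 1), r (n + 2), X 2 ^ (n + 1)} :
          Set (MvPolynomial (Fin 3) ℤ)))) (RingHom.ker φ) =
      Ideal.comap (brψ (e'+1)) (Ideal.span ({2 * X 0, X 1 ^ (n + 1)} :
          Set (MvPolynomial (Fin 2) ℤ))) := by
    rw [RingHom.comap_ker, hφmk, ← RingHom.comap_ker, Ideal.mk_ker]
  have hkerspan : RingHom.ker φ = Ideal.span {Ideal.Quotient.mk
      (Ideal.span ({2 * X 0, X 0 * X 1, r (n + 1), r (n + 2), X 2 ^ (n + 1)} :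
        Set (MvPolynomial (Fin 3) ℤ))) (X 1 ^ 2 - 4 * X 2)} := by
    conv_lhs => rw [← Ideal.map_comap_of_surjective _ Ideal.Quotient.mk_surjective (RingHom.ker φ)]
    rw [hker, brKey e' n hn r hr0 hr1 hrec, brMapSpan]
  constructor
  · intro _
    exact hkerspan
  · intro hn1
    subst hn1
    rw [hkerspan]
    have h1 : (Ideal.Quotient.mk
        (Ideal.span ({2 * X 0, X 0 * X 1, r (1 + 1), r (1 + 2), X 2 ^ (1 + 1)} :
          Set (MvPolynomial (Fin 3) ℤ)))) (X 1 ^ 2 - 4 * X 2) =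
        -((Ideal.Quotient.mk
        (Ideal.span ({2 * X 0, X 0 * X 1, r (1 + 1), r (1 + 2), X 2 ^ (1 + 1)} :
          Set (MvPolynomial (Fin 3) ℤ)))) (2 * X 2)) := by
      rw [← map_neg, Ideal.Quotient.mk_eq_mk_iff_sub_mem]
      have hr2 : X 1 ^ 2 - 4 * X 2 - -(2 * X 2) = r (1 + 1) := by
        rw [show (1:ℕ)+1 = 0+2 from rfl, hrec 0, hr1, hr0]
        ring
      rw [hr2]
      exact Ideal.subset_span (by simp)
    rw [h1]
    exact Ideal.span_singleton_neg _
end
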